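/- Let G be a countable group with sofic approximation 𝔖, and let T₁, T₂ be measure-preserving actions of G on standard probability spaces (X₁,μ₁), (X₂,μ₂). If T₁ is weakly contained in T₂ and T₂ is 𝔖-approximable, then T₁ is 𝔖-approximable. -/

import Mathlib

/-! Given `ε > 0`, weak containment yields an observable of `T₂` whose distribution is
`ε/2`-close to `distr f`, and approximability of `T₂` yields microstates that are eventually
`ε/2`-close to that distribution. The triangle inequality for the Kantorovich distance, obtained
by gluing two couplings along a disintegration of the second one, makes these microstates
eventually `ε`-close to `distr f`; choosing near-optimal microstates at every level then gives a
single sequence converging to `distr f`. -/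

open Filter Topology
open scoped ENNReal
open MeasureTheory (Measure MeasurePreserving IsProbabilityMeasure)

namespace SoficPaper

/-- The normalized Hamming distance between two permutations of a (finite) set `V`. -/
noncomputable def hammingDist {V : Type*} (g₁ g₂ : Equiv.Perm V) : ℝ :=
  (Set.ncard {v | g₁ v ≠ g₂ v} : ℝ) / (Nat.card V : ℝ)

/-- `γ` is an enumeration `(γ_i)_{i ≥ 1}` of the elements of `G`. -/
def IsEnumeration {G : Type*} (γ : ℕ → G) : Prop :=
  (∀ g : G, ∃ i : ℕ, 1 ≤ i ∧ γ i = g) ∧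
  ∀ i j : ℕ, 1 ≤ i → 1 ≤ j → γ i = γ j → i = j

open scoped Classical in
/-- The metric on `A^G` (with `A` carrying the discrete metric):
`d(t₁,t₂) = sup_i (1/i) · d_A(t₁(γ_i), t₂(γ_i))`.  (The `i = 0` term vanishes since `1/0 = 0`.) -/
noncomputable def seqDist {G A : Type*} (γ : ℕ → G) (t₁ t₂ : G → A) : ℝ :=
  ⨆ i : ℕ, (1 / (i : ℝ)) * (if t₁ (γ i) = t₂ (γ i) then 0 else 1)

/-- The Kantorovich distance between two (probability) measures on `A^G`:
the infimum of `∫ d dξ` over all couplings `ξ`.  It metrizes the weak* topology. -/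
noncomputable def kantorovich {G A : Type*} [MeasurableSpace A] (γ : ℕ → G)
    (μ₁ μ₂ : Measure (G → A)) : ℝ :=
  sInf { r : ℝ | ∃ ξ : Measure ((G → A) × (G → A)), IsProbabilityMeasure ξ ∧
    ξ.map Prod.fst = μ₁ ∧ ξ.map Prod.snd = μ₂ ∧ r = ∫ p, seqDist γ p.1 p.2 ∂ξ }

/-- The action of `G` on `X` is measure preserving for `μ`. -/
def IsPmpAction (G : Type*) [Group G] {X : Type*} [MeasurableSpace X] [MulAction G X]
    (μ : Measure X) : Prop :=
  ∀ g : G, MeasurePreserving (fun x : X => g • x) μ μ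

/-- `f^G : X → A^G`, `f^G(x)(g) = f(g • x)`. -/
def obsG (G : Type*) [Group G] {X A : Type*} [MulAction G X] (f : X → A) : X → G → A :=
  fun x g => f (g • x)

/-- `distr(f) = (f^G)_* μ`. -/
noncomputable def distr (G : Type*) [Group G] {X A : Type*} [MeasurableSpace X]
    [MeasurableSpace A] [MulAction G X] (μ : Measure X) (f : X → A) : Measure (G → A) :=
  μ.map (obsG G f)

/-- The metric on observables: `d(f₁,f₂) = μ {x | f₁ x ≠ f₂ x}`. -/
noncomputable def obsDist {X A : Type*} [MeasurableSpace X] (μ : Measure X)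
    (f₁ f₂ : X → A) : ℝ :=
  (μ {x | f₁ x ≠ f₂ x}).toReal

/-- `θ_{v,σ} : A^V → A^G`, `θ_{v,σ}(τ)(g) = τ(σ^g(v))`. -/
def theta {G V A : Type*} (σ : G → Equiv.Perm V) (v : V) (τ : V → A) : G → A :=
  fun g => τ (σ g v)

/-- `Θ_σ(η) = (1/|V|) ∑_{v ∈ V} (θ_{v,σ})_* η`. -/
noncomputable def Theta {G V A : Type*} [MeasurableSpace A] (σ : G → Equiv.Perm V)
    (η : Measure (V → A)) : Measure (G → A) :=
  (Nat.card V : ℝ≥0∞)⁻¹ • MeasureTheory.Measure.sum (fun v : V => η.map (theta σ v))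

/-- `((V_i), (σ_i))` is a sofic approximation of `G`. -/
def IsSoficApprox {G : Type*} [Group G] {V : ℕ → Type*}
    (σ : ∀ i, G → Equiv.Perm (V i)) : Prop :=
  (∀ g₁ g₂ : G, g₁ ≠ g₂ →
      Tendsto (fun i => hammingDist (σ i g₁) (σ i g₂)) atTop (𝓝 1)) ∧
  (∀ g₁ g₂ : G,
      Tendsto (fun i => hammingDist (σ i g₁ * σ i g₂) (σ i (g₁ * g₂))) atTop (𝓝 0))

/-- A group is sofic if it admits a sofic approximation. -/
def SoficGroup (G : Type*) [Group G] : Prop :=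
  ∃ (V : ℕ → Type) (σ : ∀ i, G → Equiv.Perm (V i)), (∀ i, Finite (V i)) ∧ IsSoficApprox σ

/-- `σ : G → Sym(V)` is `k`-good with respect to the enumeration `γ`. -/
def kGood {G : Type*} [Group G] (γ : ℕ → G) {V : Type*} (σ : G → Equiv.Perm V)
    (k : ℕ) : Prop :=
  (∀ i j : ℕ, 1 ≤ i → i < j → j ≤ k →
      hammingDist (σ (γ i)) (σ (γ j)) > 1 - 1 / (k : ℝ)) ∧
  (∀ i j : ℕ, 1 ≤ i → i ≤ k → 1 ≤ j → j ≤ k →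
      hammingDist (σ (γ i) * σ (γ j)) (σ (γ i * γ j)) < 1 / (k : ℝ))

/-- The action is `𝔖`-approximable: every observable admits microstates along the
full sequence, with `Θ_{σ_i}(δ_{τ_i}) → distr f` in the weak* topology (metrized by
the Kantorovich distance). -/
def Approximable (G : Type*) [Group G] (γ : ℕ → G) {X : Type*} [MeasurableSpace X]
    [MulAction G X] (μ : Measure X) {V : ℕ → Type}
    (σ : ∀ i, G → Equiv.Perm (V i)) : Prop :=
  ∀ (A : Type) [Fintype A] [MeasurableSpace A] [DiscreteMeasurableSpace A] (f : X → A),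
    Measurable f → ∃ τ : ∀ i, V i → A,
      Tendsto (fun i => kantorovich γ (Theta (σ i) (MeasureTheory.Measure.dirac (τ i)))
        (distr G μ f)) atTop (𝓝 0)

/-- The action is `𝔖`-weakly approximable: every observable admits microstates along
some subsequence. -/
def WeaklyApproximable (G : Type*) [Group G] (γ : ℕ → G) {X : Type*} [MeasurableSpace X]
    [MulAction G X] (μ : Measure X) {V : ℕ → Type}
    (σ : ∀ i, G → Equiv.Perm (V i)) : Prop :=
  ∀ (A : Type) [Fintype A] [MeasurableSpace A] [DiscreteMeasurableSpace A] (f : X → A),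
    Measurable f → ∃ φ : ℕ → ℕ, StrictMono φ ∧ ∃ τ : ∀ j, V (φ j) → A,
      Tendsto (fun j => kantorovich γ (Theta (σ (φ j)) (MeasureTheory.Measure.dirac (τ j)))
        (distr G μ f)) atTop (𝓝 0)

/-- A pmp action is sofic if it is weakly approximable with respect to some sofic
approximation of `G`. -/
def SoficAction (G : Type*) [Group G] (γ : ℕ → G) {X : Type*} [MeasurableSpace X]
    [MulAction G X] (μ : Measure X) : Prop :=
  ∃ (V : ℕ → Type) (σ : ∀ i, G → Equiv.Perm (V i)),
    (∀ i, Finite (V i)) ∧ IsSoficApprox σ ∧ WeaklyApproximable G γ μ σ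

/-- Weak containment of pmp actions: every observable of the first action has its
distribution approximated by distributions of observables of the second action. -/
def WeaklyContained (G : Type*) [Group G] (γ : ℕ → G) {X₁ X₂ : Type*}
    [MeasurableSpace X₁] [MeasurableSpace X₂] [MulAction G X₁] [MulAction G X₂]
    (μ₁ : Measure X₁) (μ₂ : Measure X₂) : Prop :=
  ∀ (A : Type) [Fintype A] [MeasurableSpace A] [DiscreteMeasurableSpace A] (f₁ : X₁ → A),
    Measurable f₁ → ∀ ε : ℝ, 0 < ε →
      ∃ f₂ : X₂ → A, Measurable f₂ ∧ kantorovich γ (distr G μ₂ f₂) (distr G μ₁ f₁) < ε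

/-- A tower of observables on `(X, μ)`. -/
structure ObsTower {X : Type*} [MeasurableSpace X] (μ : Measure X) where
  A : ℕ → Type
  [fintypeA : ∀ i, Fintype (A i)]
  [measA : ∀ i, MeasurableSpace (A i)]
  [discA : ∀ i, DiscreteMeasurableSpace (A i)]
  f : ∀ i, X → A i
  measf : ∀ i, Measurable (f i)
  π : ∀ i j, j < i → A i → A j
  compat : ∀ i j (h : j < i), ∀ᵐ x ∂μ, π i j h (f i x) = f j x
  π_comp : ∀ i j k (hij : i < j) (hjk : j < k),
    π j i hij ∘ π k j hjk = π k i (hij.trans hjk)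

attribute [instance] ObsTower.fintypeA ObsTower.measA ObsTower.discA

/-- Sufficiency of a sequence of observables: every observable is approximated, up to
any `ε > 0`, by a post-composition of some member of the sequence. -/
def SufficientSeq {X : Type*} [MeasurableSpace X] (μ : Measure X) (A : ℕ → Type)
    (f : ∀ i, X → A i) : Prop :=
  ∀ (B : Type) [Fintype B] [MeasurableSpace B] [DiscreteMeasurableSpace B] (g : X → B),
    Measurable g → ∀ ε : ℝ, 0 < ε →
      ∃ (i : ℕ) (π' : A i → B), (μ {x | π' (f i x) ≠ g x}).toReal < ε

/-- A sufficient tower of observables. -/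
def ObsTower.Sufficient {X : Type*} [MeasurableSpace X] {μ : Measure X}
    (T : ObsTower μ) : Prop :=
  SufficientSeq μ T.A T.f

/-- A pmp action of `G` on a standard probability space, bundled. -/
structure PmpSystem (G : Type*) [Group G] where
  X : Type
  [mX : MeasurableSpace X]
  [act : MulAction G X]
  sb : StandardBorelSpace X
  μ : Measure X
  prob : IsProbabilityMeasure μ
  pmp : IsPmpAction G μ

attribute [instance] PmpSystem.mX PmpSystem.act

/-- A universal sofic action: a sofic action weakly containing every sofic action. -/
def UniversalSoficAction (G : Type*) [Group G] (γ : ℕ → G) (S : PmpSystem G) : Prop :=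
  SoficAction G γ S.μ ∧
  ∀ T : PmpSystem G, SoficAction G γ T.μ → WeaklyContained G γ T.μ S.μ

/-- A maximal sofic approximation: a sofic approximation with respect to which every
universal sofic action is approximable. -/
def MaximalSoficApprox (G : Type*) [Group G] (γ : ℕ → G) {V : ℕ → Type}
    (σ : ∀ i, G → Equiv.Perm (V i)) : Prop :=
  (∀ i, Finite (V i)) ∧ IsSoficApprox σ ∧
  ∀ S : PmpSystem G, UniversalSoficAction G γ S → Approximable G γ S.μ σ

/-- The product of two measures on `ι → A`, viewed as a measure on `ι → A × A`. -/
noncomputable def pairMeasure {ι A : Type*} [MeasurableSpace A]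
    (η₁ η₂ : Measure (ι → A)) : Measure (ι → A × A) :=
  (η₁.prod η₂).map (fun p i => (p.1 i, p.2 i))

/-- The action is strongly sofic (admits a doubly-quenched approximation) with respect
to `((V_i), (σ_i))`. -/
def StronglySofic (G : Type*) [Group G] (γ : ℕ → G) {X : Type*} [MeasurableSpace X]
    [MulAction G X] (μ : Measure X) {V : ℕ → Type}
    (σ : ∀ i, G → Equiv.Perm (V i)) : Prop :=
  ∀ (A : Type) [Fintype A] [MeasurableSpace A] [DiscreteMeasurableSpace A] (f : X → A),
    Measurable f → ∃ η : ∀ i, Measure (V i → A),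
      (∀ i, IsProbabilityMeasure (η i)) ∧
      Tendsto (fun i => kantorovich γ (Theta (σ i) (pairMeasure (η i) (η i)))
          (pairMeasure (distr G μ f) (distr G μ f))) atTop (𝓝 0) ∧
      ∀ ε : ℝ, 0 < ε →
        Tendsto (fun i => pairMeasure (η i) (η i)
            {ξ : V i → A × A | kantorovich γ (Theta (σ i) (MeasureTheory.Measure.dirac ξ))
              (pairMeasure (distr G μ f) (distr G μ f)) < ε})
          atTop (𝓝 (1 : ℝ≥0∞))

open MeasureTheory ProbabilityTheory

section SeqDist

variable {G A : Type*} (γ : ℕ → G)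

open scoped Classical in
lemma seqDist_term_nonneg (t₁ t₂ : G → A) (i : ℕ) :
    0 ≤ (1 / (i : ℝ)) * (if t₁ (γ i) = t₂ (γ i) then 0 else 1) := by
  split_ifs <;> positivity

open scoped Classical in
lemma seqDist_term_le_one (t₁ t₂ : G → A) (i : ℕ) :
    (1 / (i : ℝ)) * (if t₁ (γ i) = t₂ (γ i) then 0 else 1) ≤ 1 := by
  split_ifs
  · simp
  · rcases i with _ | i
    · simp
    · simpa using inv_le_one_of_one_le₀ (by simp : (1 : ℝ) ≤ i + 1)

open scoped Classical in
lemma seqDist_term_le (t₁ t₂ : G → A) (i : ℕ) :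
    (1 / (i : ℝ)) * (if t₁ (γ i) = t₂ (γ i) then 0 else 1) ≤ seqDist γ t₁ t₂ :=
  le_ciSup ⟨1, Set.forall_mem_range.2 (seqDist_term_le_one γ t₁ t₂)⟩ i

lemma seqDist_nonneg (t₁ t₂ : G → A) : 0 ≤ seqDist γ t₁ t₂ :=
  Real.iSup_nonneg (seqDist_term_nonneg γ t₁ t₂)

lemma seqDist_le_one (t₁ t₂ : G → A) : seqDist γ t₁ t₂ ≤ 1 :=
  ciSup_le (seqDist_term_le_one γ t₁ t₂)

lemma seqDist_triangle (t₁ t₂ t₃ : G → A) :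
    seqDist γ t₁ t₃ ≤ seqDist γ t₁ t₂ + seqDist γ t₂ t₃ := by
  refine ciSup_le fun i => le_trans ?_
    (add_le_add (seqDist_term_le γ t₁ t₂ i) (seqDist_term_le γ t₂ t₃ i))
  split_ifs with h₁₃ h₁₂ h₂₃ h₂₃ h₁₂ h₂₃ h₂₃ <;> first | exact absurd (h₁₂.trans h₂₃) h₁₃ | simp

lemma measurable_seqDist [MeasurableSpace A] [MeasurableSingletonClass A] [Countable A] :
    Measurable fun p : (G → A) × (G → A) => seqDist γ p.1 p.2 :=
  Measurable.iSup fun i => Measurable.const_mul (Measurable.ite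
    (measurableSet_eq_fun (f := fun p : (G → A) × (G → A) => p.1 (γ i)) (g := fun p => p.2 (γ i))
      (by fun_prop) (by fun_prop)) measurable_const measurable_const) _

end SeqDist

lemma integrable_seqDist {G A β : Type*} [MeasurableSpace A] [MeasurableSingletonClass A]
    [Countable A] [MeasurableSpace β] (γ : ℕ → G) {ν : Measure β} [IsFiniteMeasure ν]
    {u v : β → G → A} (hu : Measurable u) (hv : Measurable v) :
    Integrable (fun x => seqDist γ (u x) (v x)) ν :=
  Integrable.of_bound ((measurable_seqDist γ).comp (hu.prodMk hv)).aestronglyMeasurable 1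
    (Eventually.of_forall fun x => by
      rw [Real.norm_of_nonneg (seqDist_nonneg γ _ _)]
      exact seqDist_le_one γ _ _)

lemma exists_glued_measure {α β δ : Type*} [MeasurableSpace α] [MeasurableSpace β]
    [MeasurableSpace δ] [StandardBorelSpace δ] {ξ₁ : Measure (α × β)} {ξ₂ : Measure (β × δ)}
    [IsProbabilityMeasure ξ₁] [IsProbabilityMeasure ξ₂] (h : ξ₁.map Prod.snd = ξ₂.map Prod.fst) :
    ∃ m : Measure ((α × β) × δ), IsProbabilityMeasure m ∧ m.map Prod.fst = ξ₁ ∧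
      m.map (fun x => (x.1.2, x.2)) = ξ₂ := by
  have : Nonempty δ := (nonempty_of_isProbabilityMeasure ξ₂).map Prod.snd
  set κ : Kernel (α × β) δ := ξ₂.condKernel.prodMkLeft α
  refine ⟨ξ₁ ⊗ₘ κ, inferInstance, Measure.fst_compProd ξ₁ κ, ?_⟩
  have hψ : Measurable fun x : (α × β) × δ => (x.1.2, x.2) := by fun_prop
  ext s hs
  rw [Measure.map_apply hψ hs, Measure.compProd_apply (hψ hs)]
  calc ∫⁻ ab, κ ab (Prod.mk ab ⁻¹' ((fun x : (α × β) × δ => (x.1.2, x.2)) ⁻¹' s)) ∂ξ₁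
      = ∫⁻ b, ξ₂.condKernel b (Prod.mk b ⁻¹' s) ∂(ξ₁.map Prod.snd) :=
        (lintegral_map (Kernel.measurable_kernel_prodMk_left hs) measurable_snd).symm
    _ = (ξ₂.fst ⊗ₘ ξ₂.condKernel) s := by rw [h, Measure.compProd_apply hs]; rfl
    _ = ξ₂ s := by rw [ξ₂.disintegrate]

section Kantorovich

variable {G A : Type*} [MeasurableSpace A] (γ : ℕ → G) {μ₁ μ₂ : Measure (G → A)}

lemma kantorovich_nonneg : 0 ≤ kantorovich γ μ₁ μ₂ :=
  Real.sInf_nonneg <| by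
    rintro _ ⟨ξ, -, -, -, rfl⟩
    exact integral_nonneg fun p => seqDist_nonneg γ p.1 p.2

lemma kantorovich_le_integral {ξ : Measure ((G → A) × (G → A))} [IsProbabilityMeasure ξ]
    (h₁ : ξ.map Prod.fst = μ₁) (h₂ : ξ.map Prod.snd = μ₂) :
    kantorovich γ μ₁ μ₂ ≤ ∫ p, seqDist γ p.1 p.2 ∂ξ :=
  csInf_le ⟨0, by
    rintro _ ⟨ξ, -, -, -, rfl⟩
    exact integral_nonneg fun p => seqDist_nonneg γ p.1 p.2⟩ ⟨ξ, ‹_›, h₁, h₂, rfl⟩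

lemma exists_coupling_integral_lt [IsProbabilityMeasure μ₁] [IsProbabilityMeasure μ₂] {c : ℝ}
    (h : kantorovich γ μ₁ μ₂ < c) :
    ∃ ξ : Measure ((G → A) × (G → A)), IsProbabilityMeasure ξ ∧ ξ.map Prod.fst = μ₁ ∧
      ξ.map Prod.snd = μ₂ ∧ ∫ p, seqDist γ p.1 p.2 ∂ξ < c := by
  obtain ⟨_, ⟨ξ, hξ, h₁, h₂, rfl⟩, hlt⟩ := exists_lt_of_csInf_lt
    (by exact ⟨_, μ₁.prod μ₂, inferInstance, Measure.fst_prod, Measure.snd_prod, rfl⟩) h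
  exact ⟨ξ, hξ, h₁, h₂, hlt⟩

-- Such measures have no couplings, and `sInf ∅ = 0`.
lemma kantorovich_eq_zero_of_not_isProbabilityMeasure
    (h : ¬(IsProbabilityMeasure μ₁ ∧ IsProbabilityMeasure μ₂)) : kantorovich γ μ₁ μ₂ = 0 := by
  refine (congrArg sInf (Set.eq_empty_of_forall_notMem ?_)).trans Real.sInf_empty
  rintro _ ⟨ξ, hξ, rfl, rfl, -⟩
  exact h ⟨Measure.isProbabilityMeasure_map measurable_fst.aemeasurable,
    Measure.isProbabilityMeasure_map measurable_snd.aemeasurable⟩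

lemma kantorovich_triangle [Countable G] [MeasurableSingletonClass A] [Countable A]
    (p q r : Measure (G → A)) [IsProbabilityMeasure q] :
    kantorovich γ p r ≤ kantorovich γ p q + kantorovich γ q r := by
  by_cases hpr : IsProbabilityMeasure p ∧ IsProbabilityMeasure r
  swap
  · rw [kantorovich_eq_zero_of_not_isProbabilityMeasure γ hpr]
    exact add_nonneg (kantorovich_nonneg γ) (kantorovich_nonneg γ)
  obtain ⟨_, _⟩ := hpr
  refine le_of_forall_pos_lt_add fun ε hε => ?_
  obtain ⟨ξ₁, _, h₁p, h₁q, hξ₁⟩ :=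
    exists_coupling_integral_lt γ (lt_add_of_pos_right (kantorovich γ p q) (half_pos hε))
  obtain ⟨ξ₂, _, h₂q, h₂r, hξ₂⟩ :=
    exists_coupling_integral_lt γ (lt_add_of_pos_right (kantorovich γ q r) (half_pos hε))
  obtain ⟨m, _, hm₁, hm₂⟩ := exists_glued_measure (h₁q.trans h₂q.symm)
  have hφ : Measurable fun x : ((G → A) × (G → A)) × (G → A) => (x.1.1, x.2) := by fun_prop
  have hψ : Measurable fun x : ((G → A) × (G → A)) × (G → A) => (x.1.2, x.2) := by fun_prop
  have := Measure.isProbabilityMeasure_map (μ := m) hφ.aemeasurable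
  have hΞ₁ : (m.map fun x => (x.1.1, x.2)).map Prod.fst = p := by
    rw [Measure.map_map measurable_fst hφ, ← h₁p, ← hm₁, Measure.map_map measurable_fst
      measurable_fst]
    rfl
  have hΞ₂ : (m.map fun x => (x.1.1, x.2)).map Prod.snd = r := by
    rw [Measure.map_map measurable_snd hφ, ← h₂r, ← hm₂, Measure.map_map measurable_snd hψ]
    rfl
  calc kantorovich γ p r ≤ ∫ x, seqDist γ x.1 x.2 ∂(m.map fun x => (x.1.1, x.2)) :=
        kantorovich_le_integral γ hΞ₁ hΞ₂
    _ = ∫ x, seqDist γ x.1.1 x.2 ∂m :=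
        integral_map hφ.aemeasurable (measurable_seqDist γ).aestronglyMeasurable
    _ ≤ ∫ x, seqDist γ x.1.1 x.1.2 + seqDist γ x.1.2 x.2 ∂m :=
        integral_mono (integrable_seqDist γ (by fun_prop) (by fun_prop))
          ((integrable_seqDist γ (by fun_prop) (by fun_prop)).add
            (integrable_seqDist γ (by fun_prop) (by fun_prop)))
          fun x => seqDist_triangle γ _ _ _
    _ = (∫ x, seqDist γ x.1 x.2 ∂ξ₁) + ∫ x, seqDist γ x.1 x.2 ∂ξ₂ := by
        rw [integral_add (integrable_seqDist γ (by fun_prop) (by fun_prop))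
            (integrable_seqDist γ (by fun_prop) (by fun_prop)), ← hm₁, ← hm₂,
          integral_map measurable_fst.aemeasurable (measurable_seqDist γ).aestronglyMeasurable,
          integral_map hψ.aemeasurable (measurable_seqDist γ).aestronglyMeasurable]
    _ < kantorovich γ p q + kantorovich γ q r + ε := by linarith

end Kantorovich

lemma isProbabilityMeasure_distr {G X A : Type*} [Group G] [MeasurableSpace X]
    [MeasurableSpace A] [MulAction G X] (μ : Measure X) [IsProbabilityMeasure μ]
    {f : X → A} (hf : Measurable f) (hact : ∀ g : G, Measurable fun x : X => g • x) :
    IsProbabilityMeasure (distr G μ f) :=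
  Measure.isProbabilityMeasure_map
    (measurable_pi_lambda _ fun g => hf.comp (hact g)).aemeasurable

lemma exists_tendsto_zero_of_forall_eventually_exists_lt {T : ℕ → Type*}
    [∀ i, Nonempty (T i)] {c : ∀ i, T i → ℝ} (hc : ∀ i t, 0 ≤ c i t)
    (h : ∀ ε > 0, ∀ᶠ i in atTop, ∃ t, c i t < ε) :
    ∃ t : ∀ i, T i, Tendsto (fun i => c i (t i)) atTop (𝓝 0) := by
  have hinf_nonneg : ∀ i, 0 ≤ ⨅ t, c i t := fun i => le_ciInf (hc i)
  have hinf : Tendsto (fun i => ⨅ t, c i t) atTop (𝓝 0) := by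
    refine tendsto_order.2 ⟨fun a ha => .of_forall fun i => ha.trans_le (hinf_nonneg i),
      fun ε hε => ?_⟩
    filter_upwards [h ε hε] with i ⟨t, ht⟩
    exact (ciInf_le ⟨0, Set.forall_mem_range.2 (hc i)⟩ t).trans_lt ht
  choose t ht using fun i : ℕ => exists_lt_of_ciInf_lt
    (lt_add_of_pos_right (⨅ t, c i t) (Nat.one_div_pos_of_nat (α := ℝ) (n := i)))
  refine ⟨t, squeeze_zero (fun i => hc i (t i)) (fun i => (ht i).le) ?_⟩
  simpa using hinf.add tendsto_one_div_add_atTop_nhds_zero_nat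

theorem weaklyContained_approximable_general {G : Type*} [Group G] [Countable G]
    (γ : ℕ → G)
    {X₁ X₂ : Type*} [MeasurableSpace X₁] [MeasurableSpace X₂]
    [MulAction G X₁] [MulAction G X₂]
    (μ₁ : Measure X₁) (μ₂ : Measure X₂)
    [IsProbabilityMeasure μ₂]
    (hact₂ : IsPmpAction G μ₂)
    {V : ℕ → Type} (σ : ∀ i, G → Equiv.Perm (V i))
    (hwc : WeaklyContained G γ μ₁ μ₂) (happx : Approximable G γ μ₂ σ) :
    Approximable G γ μ₁ σ := by
  intro A _ _ _ f hf
  have hclose : ∀ ε > 0, ∀ᶠ i in atTop, ∃ τ : V i → A,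
      kantorovich γ (Theta (σ i) (Measure.dirac τ)) (distr G μ₁ f) < ε := by
    intro ε hε
    obtain ⟨f₂, hf₂, hf₂ε⟩ := hwc A f hf (ε / 2) (half_pos hε)
    obtain ⟨τ, hτ⟩ := happx A f₂ hf₂
    have := isProbabilityMeasure_distr μ₂ hf₂ fun g => (hact₂ g).measurable
    filter_upwards [hτ.eventually (gt_mem_nhds (half_pos hε))] with i hi
    exact ⟨τ i, (kantorovich_triangle γ _ (distr G μ₂ f₂) _).trans_lt (by linarith)⟩
  obtain ⟨f₂, hf₂, -⟩ := hwc A f hf 1 one_pos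
  obtain ⟨τ, -⟩ := happx A f₂ hf₂
  have := fun i => Nonempty.intro (τ i)
  exact exists_tendsto_zero_of_forall_eventually_exists_lt
    (c := fun i t => kantorovich γ (Theta (σ i) (Measure.dirac t)) (distr G μ₁ f))
    (fun _ _ => kantorovich_nonneg γ) hclose

/-- If `T₁` is weakly contained in `T₂` and `T₂` is
`𝔖`-approximable, then `T₁` is `𝔖`-approximable. -/
theorem weaklyContained_approximable {G : Type*} [Group G] [Countable G]
    (γ : ℕ → G) (hγ : IsEnumeration γ)
    {X₁ X₂ : Type*} [MeasurableSpace X₁] [MeasurableSpace X₂]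
    [StandardBorelSpace X₁] [StandardBorelSpace X₂] [MulAction G X₁] [MulAction G X₂]
    (μ₁ : Measure X₁) (μ₂ : Measure X₂)
    [IsProbabilityMeasure μ₁] [IsProbabilityMeasure μ₂]
    (hact₁ : IsPmpAction G μ₁) (hact₂ : IsPmpAction G μ₂)
    {V : ℕ → Type} (hfin : ∀ i, Finite (V i)) (σ : ∀ i, G → Equiv.Perm (V i))
    (hσ : IsSoficApprox σ)
    (hwc : WeaklyContained G γ μ₁ μ₂) (happx : Approximable G γ μ₂ σ) :
    Approximable G γ μ₁ σ :=
  weaklyContained_approximable_general γ μ₁ μ₂ hact₂ σ hwc happx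

end SoficPaper
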